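/- Let n ≥ 6, 0 < i < j < n/2, gcd(n,i,j) = 1, i+j ≠ n/2, and suppose none of 4i ≡ 0, 4j ≡ 0, 3i ≡ ±j, 3j ≡ ±i holds mod n. Then in C_n(i,j), for every vertex a: N(a) ∩ N(a+2i) = {a+i}, N(a) ∩ N(a+2j) = {a+j}, N(a) ∩ N(a+i+j) = {a+i, a+j}, and N(a) ∩ N(a+i-j) = {a+i, a-j}. -/

import Mathlib

/-!
Both `N(a)` and `N(a + d)` are translates of the jump set `S = {±i, ±j}`, so the common
neighbours of `a` and `a + d` are `a + s` for the `s ∈ S` with `s - d ∈ S`, i.e. they come from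
the ways of writing `d = s - t` with `s, t ∈ S`. The excluded congruences are exactly the
coincidences that would give `2i`, `i + j` (and, swapping `i, j` or negating `j`, also `2j` and
`i - j`) a representation beyond the obvious ones.
-/

/-- The two-generator circulant graph `C_n(i,j)` on `ℤ/nℤ`:
distinct `a, b` are adjacent iff `a - b ∈ {i, -i, j, -j}`. -/
def circulant (n : ℕ) (i j : ZMod n) : SimpleGraph (ZMod n) where
  Adj a b := a ≠ b ∧ (a - b = i ∨ a - b = -i ∨ a - b = j ∨ a - b = -j)
  symm := by
    constructor
    rintro a b ⟨hab, h⟩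
    refine ⟨fun h' => hab h'.symm, ?_⟩
    have hba : b - a = -(a - b) := by ring
    rcases h with h | h | h | h <;> rw [hba, h] <;> simp
  loopless := by constructor; rintro a ⟨h, -⟩; exact h rfl

open Pointwise

section JumpSet

variable {R : Type*}

def jumpSet [Neg R] (i j : R) : Set R := {i, -i, j, -j}

theorem jumpSet_comm [Neg R] (i j : R) : jumpSet i j = jumpSet j i := by
  ext s
  simp only [jumpSet, Set.mem_insert_iff, Set.mem_singleton_iff]
  tauto

theorem jumpSet_neg_right [InvolutiveNeg R] (i j : R) : jumpSet i (-j) = jumpSet i j := by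
  ext s
  simp only [jumpSet, neg_neg, Set.mem_insert_iff, Set.mem_singleton_iff]
  tauto

variable [CommRing R] {i j : R}

theorem jumpSet_inter_vadd_two_mul (h2i : 2 * i ≠ 0) (h4i : 4 * i ≠ 0) (hij : i ≠ j)
    (hij' : i ≠ -j) (h3i : 3 * i ≠ j) (h3i' : 3 * i ≠ -j) (h2ij : 2 * i ≠ 2 * j)
    (h2ij' : 2 * i ≠ -(2 * j)) :
    jumpSet i j ∩ (2 * i +ᵥ jumpSet i j) = {i} := by
  ext s
  simp only [jumpSet, Set.mem_inter_iff, Set.mem_vadd_set_iff_neg_vadd_mem, vadd_eq_add,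
    Set.mem_insert_iff, Set.mem_singleton_iff]
  constructor
  · rintro ⟨rfl | rfl | rfl | rfl, h⟩ <;> grind
  · rintro rfl
    grind

theorem jumpSet_inter_vadd_add (h2i : 2 * i ≠ 0) (h2j : 2 * j ≠ 0) (hij : i ≠ j)
    (hij' : i ≠ -j) (h3i' : 3 * i ≠ -j) (h3j' : 3 * j ≠ -i) (h2ij' : 2 * i ≠ -(2 * j)) :
    jumpSet i j ∩ ((i + j) +ᵥ jumpSet i j) = {i, j} := by
  ext s
  simp only [jumpSet, Set.mem_inter_iff, Set.mem_vadd_set_iff_neg_vadd_mem, vadd_eq_add,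
    Set.mem_insert_iff, Set.mem_singleton_iff]
  constructor
  · rintro ⟨rfl | rfl | rfl | rfl, h⟩ <;> grind
  · rintro (rfl | rfl) <;> grind

theorem jumpSet_inter_vadd_sub (h2i : 2 * i ≠ 0) (h2j : 2 * j ≠ 0) (hij : i ≠ j)
    (hij' : i ≠ -j) (h3i : 3 * i ≠ j) (h3j : 3 * j ≠ i) (h2ij : 2 * i ≠ 2 * j) :
    jumpSet i j ∩ ((i - j) +ᵥ jumpSet i j) = {i, -j} := by
  rw [sub_eq_add_neg, ← jumpSet_neg_right]
  exact jumpSet_inter_vadd_add h2i (by simpa using h2j) (by simpa using hij')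
    (by simpa using hij) (by simpa using h3i) (by simpa using h3j) (by simpa using h2ij)

end JumpSet

section Circulant

variable {n : ℕ} {i j : ZMod n}

theorem circulant_neighborSet (hi : i ≠ 0) (hj : j ≠ 0) (a : ZMod n) :
    (circulant n i j).neighborSet a = a +ᵥ jumpSet i j := by
  ext b
  simp only [SimpleGraph.mem_neighborSet, circulant, Set.mem_vadd_set_iff_neg_vadd_mem,
    vadd_eq_add, jumpSet, Set.mem_insert_iff, Set.mem_singleton_iff]
  grind

theorem circulant_neighborSet_inter_add (hi : i ≠ 0) (hj : j ≠ 0) (a d : ZMod n) :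
    (circulant n i j).neighborSet a ∩ (circulant n i j).neighborSet (a + d) =
      a +ᵥ (jumpSet i j ∩ (d +ᵥ jumpSet i j)) := by
  rw [circulant_neighborSet hi hj, circulant_neighborSet hi hj, Set.vadd_set_inter, add_vadd]

end Circulant

theorem natCast_ne_natCast_of_lt {n k l : ℕ} (hkl : k < l) (hl : l < n) :
    (k : ZMod n) ≠ l := by
  rw [Ne, ZMod.natCast_eq_natCast_iff', Nat.mod_eq_of_lt (hkl.trans hl), Nat.mod_eq_of_lt hl]
  exact hkl.ne

theorem natCast_ne_zero_of_lt {n k : ℕ} (hk : 0 < k) (hkn : k < n) : (k : ZMod n) ≠ 0 := by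
  exact_mod_cast (natCast_ne_natCast_of_lt hk hkn).symm

theorem stmt_14_general (n i j : ℕ) (hi : 0 < i) (hij : i < j)
    (hj : 2 * j < n)
    (hsum : 2 * (i + j) ≠ n)
    (h4i : (4 * i : ZMod n) ≠ 0) (h4j : (4 * j : ZMod n) ≠ 0)
    (h3i : (3 * i : ZMod n) ≠ (j : ZMod n)) (h3i' : (3 * i : ZMod n) ≠ -(j : ZMod n))
    (h3j : (3 * j : ZMod n) ≠ (i : ZMod n)) (h3j' : (3 * j : ZMod n) ≠ -(i : ZMod n)) :
    ∀ a : ZMod n,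
      (circulant n (i : ZMod n) (j : ZMod n)).neighborSet a ∩
          (circulant n (i : ZMod n) (j : ZMod n)).neighborSet (a + 2 * (i : ZMod n)) =
        {a + (i : ZMod n)} ∧
      (circulant n (i : ZMod n) (j : ZMod n)).neighborSet a ∩
          (circulant n (i : ZMod n) (j : ZMod n)).neighborSet (a + 2 * (j : ZMod n)) =
        {a + (j : ZMod n)} ∧
      (circulant n (i : ZMod n) (j : ZMod n)).neighborSet a ∩
          (circulant n (i : ZMod n) (j : ZMod n)).neighborSet (a + (i : ZMod n) + (j : ZMod n)) =
        {a + (i : ZMod n), a + (j : ZMod n)} ∧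
      (circulant n (i : ZMod n) (j : ZMod n)).neighborSet a ∩
          (circulant n (i : ZMod n) (j : ZMod n)).neighborSet (a + (i : ZMod n) - (j : ZMod n)) =
        {a + (i : ZMod n), a - (j : ZMod n)} := by
  have hI : (i : ZMod n) ≠ 0 := natCast_ne_zero_of_lt hi (by omega)
  have hJ : (j : ZMod n) ≠ 0 := natCast_ne_zero_of_lt (by omega) (by omega)
  have h2I : 2 * (i : ZMod n) ≠ 0 := by exact_mod_cast natCast_ne_zero_of_lt (by omega) (by omega)
  have h2J : 2 * (j : ZMod n) ≠ 0 := by exact_mod_cast natCast_ne_zero_of_lt (by omega) hj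
  have hIJ : (i : ZMod n) ≠ j := natCast_ne_natCast_of_lt hij (by omega)
  have h2IJ : 2 * (i : ZMod n) ≠ 2 * j := by exact_mod_cast natCast_ne_natCast_of_lt (by omega) hj
  have hIJ' : (i : ZMod n) ≠ -j := by
    rw [Ne, eq_neg_iff_add_eq_zero]
    exact_mod_cast natCast_ne_zero_of_lt (by omega) (by omega)
  -- `n ∣ 2(i + j) < 2n` forces `2(i + j) = n`
  have h2IJ' : 2 * (i : ZMod n) ≠ -(2 * j) := by
    rw [Ne, eq_neg_iff_add_eq_zero, ← mul_add]
    exact_mod_cast fun h => hsum <|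
      Nat.eq_of_dvd_of_lt_two_mul (by omega) ((ZMod.natCast_eq_zero_iff _ _).1 h) (by omega)
  intro a
  simp only [add_assoc, add_sub_assoc, circulant_neighborSet_inter_add hI hJ]
  refine ⟨?_, ?_, ?_, ?_⟩
  · rw [jumpSet_inter_vadd_two_mul h2I h4i hIJ hIJ' h3i h3i' h2IJ h2IJ']
    simp only [Set.vadd_set_singleton, vadd_eq_add]
  · rw [jumpSet_comm, jumpSet_inter_vadd_two_mul h2J h4j hIJ.symm (by grind) h3j h3j' h2IJ.symm
      (by grind)]
    simp only [Set.vadd_set_singleton, vadd_eq_add]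
  · rw [jumpSet_inter_vadd_add h2I h2J hIJ hIJ' h3i' h3j' h2IJ']
    simp only [Set.vadd_set_insert, Set.vadd_set_singleton, vadd_eq_add]
  · rw [jumpSet_inter_vadd_sub h2I h2J hIJ hIJ' h3i h3j h2IJ]
    simp only [Set.vadd_set_insert, Set.vadd_set_singleton, vadd_eq_add, ← sub_eq_add_neg]

theorem stmt_14 (n i j : ℕ) (hn : 6 ≤ n) (hi : 0 < i) (hij : i < j)
    (hj : 2 * j < n) (hgcd : Nat.gcd n (Nat.gcd i j) = 1)
    (hsum : 2 * (i + j) ≠ n)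
    (h4i : (4 * i : ZMod n) ≠ 0) (h4j : (4 * j : ZMod n) ≠ 0)
    (h3i : (3 * i : ZMod n) ≠ (j : ZMod n)) (h3i' : (3 * i : ZMod n) ≠ -(j : ZMod n))
    (h3j : (3 * j : ZMod n) ≠ (i : ZMod n)) (h3j' : (3 * j : ZMod n) ≠ -(i : ZMod n)) :
    ∀ a : ZMod n,
      (circulant n (i : ZMod n) (j : ZMod n)).neighborSet a ∩
          (circulant n (i : ZMod n) (j : ZMod n)).neighborSet (a + 2 * (i : ZMod n)) =
        {a + (i : ZMod n)} ∧
      (circulant n (i : ZMod n) (j : ZMod n)).neighborSet a ∩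
          (circulant n (i : ZMod n) (j : ZMod n)).neighborSet (a + 2 * (j : ZMod n)) =
        {a + (j : ZMod n)} ∧
      (circulant n (i : ZMod n) (j : ZMod n)).neighborSet a ∩
          (circulant n (i : ZMod n) (j : ZMod n)).neighborSet (a + (i : ZMod n) + (j : ZMod n)) =
        {a + (i : ZMod n), a + (j : ZMod n)} ∧
      (circulant n (i : ZMod n) (j : ZMod n)).neighborSet a ∩
          (circulant n (i : ZMod n) (j : ZMod n)).neighborSet (a + (i : ZMod n) - (j : ZMod n)) =
        {a + (i : ZMod n), a - (j : ZMod n)} :=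
  stmt_14_general n i j hi hij hj hsum h4i h4j h3i h3i' h3j h3j'
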